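/- Let w̄ > 0, ℓ > 0, ξ ∈ (-ℓ,ℓ), and for ε > 0 let κ₋(ε) > w̄²/2 be the unique solution of √(2κ) tanh((ℓ+ξ)√(κ/2)/ε) = w̄. Then κ₋(ε) → w̄²/2 as ε → 0⁺. -/

import Mathlib

/-!
Writing `t = ((ℓ+ξ)/ε)·√(κ₋/2)`, the defining equation says `κ₋ = w̄² / (2 tanh² t)`. Since
`κ₋ ≥ w̄²/2`, also `t ≥ ((ℓ+ξ)/ε)·(w̄/2)`, so by monotonicity of `tanh`,
`w̄²/2 ≤ κ₋ ≤ w̄² / (2 tanh² (((ℓ+ξ)/ε)·(w̄/2)))`, and the upper bound tends to `w̄²/2`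
because `tanh → 1` at `+∞`.
-/

open Real Set Filter Topology

namespace Real

theorem tanh_eq_one_sub_two_div (x : ℝ) : tanh x = 1 - 2 / (exp (2 * x) + 1) := by
  have hexp : exp (2 * x) = exp x * exp x := by rw [two_mul, exp_add]
  have hx := exp_pos x
  rw [tanh_eq, exp_neg, hexp]
  field_simp
  ring

theorem tanh_pos {x : ℝ} (hx : 0 < x) : 0 < tanh x := by
  have h : 1 < exp (2 * x) := one_lt_exp_iff.2 (by linarith)
  rw [tanh_eq_one_sub_two_div, sub_pos, div_lt_one (by linarith)]
  linarith

theorem tanh_monotone : Monotone tanh := by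
  intro x y hxy
  simp only [tanh_eq_one_sub_two_div]
  gcongr

theorem tendsto_tanh_atTop : Tendsto tanh atTop (𝓝 1) := by
  have hexp : Tendsto (fun x : ℝ ↦ exp (2 * x) + 1) atTop atTop :=
    tendsto_atTop_add_const_right _ 1
      (tendsto_exp_atTop.comp (tendsto_id.const_mul_atTop two_pos))
  have h := tendsto_const_nhds (x := (1 : ℝ)).sub (hexp.const_div_atTop 2)
  rw [sub_zero] at h
  exact h.congr fun x ↦ (tanh_eq_one_sub_two_div x).symm

end Real

theorem le_of_sqrt_mul_tanh_eq {a w κ : ℝ} (ha : 0 < a) (hw : 0 < w) (hκ : w ^ 2 / 2 ≤ κ)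
    (h : √(2 * κ) * tanh (a * √(κ / 2)) = w) :
    κ ≤ w ^ 2 / (2 * tanh (a * (w / 2)) ^ 2) := by
  have hsqrt : w / 2 ≤ √(κ / 2) :=
    le_sqrt_of_sq_le (by linarith [show (w / 2) ^ 2 = w ^ 2 / 2 / 2 by ring])
  have hκ_nonneg : 0 ≤ κ := le_trans (by positivity) hκ
  have hlow : 0 < tanh (a * (w / 2)) := tanh_pos (by positivity)
  have hmono : tanh (a * (w / 2)) ≤ tanh (a * √(κ / 2)) :=
    tanh_monotone (mul_le_mul_of_nonneg_left hsqrt ha.le)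
  have htanh : 0 < tanh (a * √(κ / 2)) := hlow.trans_le hmono
  have hκ_eq : 2 * κ = w ^ 2 / tanh (a * √(κ / 2)) ^ 2 := by
    rw [← h, mul_pow, sq_sqrt (by positivity), mul_div_cancel_right₀ _ (by positivity)]
  rw [le_div_iff₀ (by positivity)]
  calc κ * (2 * tanh (a * (w / 2)) ^ 2)
      ≤ κ * (2 * tanh (a * √(κ / 2)) ^ 2) := by gcongr
    _ = w ^ 2 := by
      rw [← mul_assoc, mul_comm κ 2, hκ_eq, div_mul_cancel₀ _ (by positivity)]

theorem stmt10_general (wbar ℓ ξ : ℝ) (hwbar : 0 < wbar)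
    (hξ : ξ ∈ Ioo (-ℓ) ℓ) (κm : ℝ → ℝ)
    (hκm : ∀ ε > (0:ℝ), κm ε ∈ Ioi (wbar^2 / 2) ∧
      Real.sqrt (2 * κm ε) * Real.tanh ((ℓ + ξ) / ε * Real.sqrt (κm ε / 2)) = wbar) :
    Tendsto κm (nhdsWithin 0 (Ioi 0)) (nhds (wbar^2 / 2)) := by
  have hlξ : 0 < ℓ + ξ := by linarith [hξ.1]
  have harg : Tendsto (fun ε ↦ (ℓ + ξ) / ε * (wbar / 2)) (𝓝[>] 0) atTop := by
    simpa only [div_eq_mul_inv] using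
      (tendsto_inv_nhdsGT_zero.const_mul_atTop hlξ).atTop_mul_const (half_pos hwbar)
  have hupper : Tendsto (fun ε ↦ wbar ^ 2 / (2 * tanh ((ℓ + ξ) / ε * (wbar / 2)) ^ 2))
      (𝓝[>] 0) (𝓝 (wbar ^ 2 / 2)) := by
    have h := (tendsto_const_nhds (x := wbar ^ 2)).div
      (((tendsto_tanh_atTop.comp harg).pow 2).const_mul 2) (by norm_num)
    rwa [one_pow, mul_one] at h
  refine tendsto_of_tendsto_of_tendsto_of_le_of_le' tendsto_const_nhds hupper ?_ ?_
  all_goals filter_upwards [self_mem_nhdsWithin] with ε hε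
  · exact (hκm ε hε).1.le
  · exact le_of_sqrt_mul_tanh_eq (div_pos hlξ hε) hwbar (hκm ε hε).1.le (hκm ε hε).2

/-- With `w̄, ℓ > 0`, `ξ ∈ (-ℓ,ℓ)` fixed, and `κ₋(ε)` the unique solution in
`(w̄²/2,∞)` of `√(2κ)·tanh(((ℓ+ξ)/ε)·√(κ/2)) = w̄`, one has `κ₋(ε) → w̄²/2`
as `ε → 0⁺`. -/
theorem stmt10 (wbar ℓ ξ : ℝ) (hwbar : 0 < wbar) (hℓ : 0 < ℓ)
    (hξ : ξ ∈ Ioo (-ℓ) ℓ) (κm : ℝ → ℝ)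
    (hκm : ∀ ε > (0:ℝ), κm ε ∈ Ioi (wbar^2 / 2) ∧
      Real.sqrt (2 * κm ε) * Real.tanh ((ℓ + ξ) / ε * Real.sqrt (κm ε / 2)) = wbar) :
    Tendsto κm (nhdsWithin 0 (Ioi 0)) (nhds (wbar^2 / 2)) :=
  stmt10_general wbar ℓ ξ hwbar hξ κm hκm
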